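/- Fix integers d, u, v, let γ be an integer and let c be a positive integer with gcd(c, 2γ) = 1. If gcd(u, c) ≠ gcd(v, c), then S_c(γ) = 0. -/

import Mathlib

/-!
After opening the Kloosterman sums, the phase of `S_c(γ)` at a unit `x` is a quadratic
polynomial in `(a, b)`. The substitution `b = s - x a` removes the cross term and leaves
`γ x⁻¹ s² + (d x⁻¹ + d + v) s + (u - v x) a`, so the sum over `a` is a complete character sum,
which vanishes unless `u ≡ v x (mod c)`; for a unit `x` that congruence forces
`gcd(u, c) = gcd(v, c)`.
-/

/-- `e_c(z) = exp(2πiz/c)`, well defined on residue classes mod `c`. -/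
noncomputable def ec (c : ℕ) (z : ZMod c) : ℂ :=
  Complex.exp (2 * Real.pi * Complex.I * (z.val : ℂ) / (c : ℂ))

/-- The Kloosterman sum `S(n,m;c) = ∑_{x ∈ (ℤ/cℤ)ˣ} e_c(nx + m x⁻¹)`. -/
noncomputable def Kloos (c : ℕ) [NeZero c] (n m : ZMod c) : ℂ :=
  ∑ x : (ZMod c)ˣ, ec c (n * (x : ZMod c) + m * ((x⁻¹ : (ZMod c)ˣ) : ZMod c))

/-- The twisted sum
`S_c(γ) = ∑_{a,b (c)} S(a(γa+d), b(γb+d); c) · e_c(2γab + (d+u)a + (d+v)b)`. -/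
noncomputable def Sc (c : ℕ) [NeZero c] (d u v : ℤ) (γ : ℤ) : ℂ :=
  ∑ a : ZMod c, ∑ b : ZMod c,
    Kloos c (a * (γ * a + d)) (b * (γ * b + d)) *
      ec c (2 * γ * a * b + (d + u) * a + (d + v) * b)

theorem ec_eq_stdAddChar (c : ℕ) [NeZero c] (z : ZMod c) : ec c z = ZMod.stdAddChar z := by
  rw [ZMod.stdAddChar_apply, ZMod.toCircle_apply]; rfl

theorem ec_add (c : ℕ) [NeZero c] (z w : ZMod c) : ec c (z + w) = ec c z * ec c w := by
  simp only [ec_eq_stdAddChar, AddChar.map_add_eq_mul]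

theorem sum_ec_mul_eq_zero (c : ℕ) [NeZero c] {t : ZMod c} (ht : t ≠ 0) :
    ∑ a : ZMod c, ec c (a * t) = 0 := by
  classical
  simpa [ec_eq_stdAddChar, ht] using AddChar.sum_mulShift t (ZMod.isPrimitive_stdAddChar c)

theorem Int.gcd_dvd_of_intCast_eq_mul {c : ℕ} {u v : ℤ} {y : ZMod c}
    (h : (u : ZMod c) = v * y) : Int.gcd v c ∣ Int.gcd u c := by
  set g := Int.gcd v c
  have hg : g ∣ c := by exact_mod_cast Int.gcd_dvd_right v c
  have hu : (u : ZMod g) = 0 := by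
    have hv : (v : ZMod g) = 0 := (ZMod.intCast_zmod_eq_zero_iff_dvd v g).2 (Int.gcd_dvd_left v c)
    simpa only [map_intCast, map_mul, hv, zero_mul] using congrArg (ZMod.castHom hg (ZMod g)) h
  exact_mod_cast
    Int.dvd_coe_gcd ((ZMod.intCast_zmod_eq_zero_iff_dvd u g).1 hu) (Int.gcd_dvd_right v c)

theorem completing_square_phase {R : Type*} [CommRing R] (γ d u v a s x y : R)
    (hxy : x * y = 1) :
    a * (γ * a + d) * x + (s - x * a) * (γ * (s - x * a) + d) * y
      + (2 * γ * a * (s - x * a) + (d + u) * a + (d + v) * (s - x * a))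
      = γ * y * s ^ 2 + (d * y + d + v) * s + a * (u - v * x) := by
  linear_combination (γ * x * a ^ 2 - 2 * γ * a * s - d * a) * hxy

theorem sum_sum_ec_eq_mul (c : ℕ) [NeZero c] (γ d u v : ZMod c) (x : (ZMod c)ˣ) :
    ∑ a : ZMod c, ∑ b : ZMod c,
      ec c (a * (γ * a + d) * x + b * (γ * b + d) * ↑x⁻¹
        + (2 * γ * a * b + (d + u) * a + (d + v) * b))
      = (∑ s : ZMod c, ec c (γ * ↑x⁻¹ * s ^ 2 + (d * ↑x⁻¹ + d + v) * s))
          * ∑ a : ZMod c, ec c (a * (u - v * x)) := by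
  rw [Finset.sum_mul_sum, Finset.sum_comm (f := fun s a => _ * _)]
  refine Finset.sum_congr rfl fun a _ => ?_
  rw [← (Equiv.subRight ((x : ZMod c) * a)).sum_comp]
  refine Finset.sum_congr rfl fun s _ => ?_
  rw [Equiv.subRight_apply, completing_square_phase _ _ _ _ _ _ _ _ x.mul_inv, ec_add]

theorem Sc_eq_sum_units (c : ℕ) [NeZero c] (d u v γ : ℤ) :
    Sc c d u v γ = ∑ x : (ZMod c)ˣ, ∑ a : ZMod c, ∑ b : ZMod c,
      ec c (a * (γ * a + d) * x + b * (γ * b + d) * ↑x⁻¹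
        + (2 * γ * a * b + (d + u) * a + (d + v) * b)) := by
  simp only [Sc, Kloos, Finset.sum_mul, ← ec_add]
  exact (Finset.sum_congr rfl fun a _ => Finset.sum_comm).trans Finset.sum_comm

theorem intCast_sub_mul_unit_ne_zero {c : ℕ} {u v : ℤ} (huv : Int.gcd u c ≠ Int.gcd v c)
    (x : (ZMod c)ˣ) : (u : ZMod c) - v * x ≠ 0 := by
  intro h
  have hu : (u : ZMod c) = v * x := sub_eq_zero.1 h
  have hv : (v : ZMod c) = u * ↑x⁻¹ := by rw [hu, mul_assoc, x.mul_inv, mul_one]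
  exact huv <|
    Nat.dvd_antisymm (Int.gcd_dvd_of_intCast_eq_mul hv) (Int.gcd_dvd_of_intCast_eq_mul hu)

theorem stmt_10_general (d u v γ : ℤ) (c : ℕ) [NeZero c]
    (huv : Int.gcd u (c : ℤ) ≠ Int.gcd v (c : ℤ)) :
    Sc c d u v γ = 0 := by
  rw [Sc_eq_sum_units]
  refine Finset.sum_eq_zero fun x _ => ?_
  rw [sum_sum_ec_eq_mul, sum_ec_mul_eq_zero c (intCast_sub_mul_unit_ne_zero huv x), mul_zero]

/-- For `gcd(c, 2γ) = 1`, if `gcd(u,c) ≠ gcd(v,c)` then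
`S_c(γ) = 0`. -/
theorem stmt_10 (d u v γ : ℤ) (c : ℕ) [NeZero c] (h : Int.gcd (c : ℤ) (2 * γ) = 1)
    (huv : Int.gcd u (c : ℤ) ≠ Int.gcd v (c : ℤ)) :
    Sc c d u v γ = 0 :=
  stmt_10_general d u v γ c huv
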